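/- Let ℓ ≥ 4, k ≥ 1, and ρ₁, ρ₂ ∈ ℤ nonzero with 2k ≥ ℓ+1 and ρ₁, ρ₂ both odd. Define graded rings R_i = ℤ[x,w]/⟨x^{ℓ+1}, w(w+ρ_i^k x^k)⟩ for i = 1,2 with deg x = 2, deg w = 2k. Then R₁ and R₂ are isomorphic as graded rings: the map x ↦ x, w ↦ a·x^k + w with a = (ρ₂^k − ρ₁^k)/2 ∈ ℤ is a well-defined graded ring isomorphism. -/

import Mathlib

/-!
Put `x = X 0`, `w = X 1`. The shear `w ↦ w + a xᵏ` (with inverse `w ↦ w - a xᵏ`) sends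
`w (w + ρ₁ᵏ xᵏ)` to `w (w + (ρ₁ᵏ + 2a) xᵏ) + a (a + ρ₁ᵏ) x²ᵏ`, and `x²ᵏ` already lies in the
ideal because `2k ≥ ℓ + 1`. So for `2a = ρ₂ᵏ - ρ₁ᵏ`, which is solvable as both `ρᵢᵏ` are odd,
the shear carries the defining ideal for `ρ₁` onto the one for `ρ₂`.
-/

open MvPolynomial

/-- The graded ring `R_i = ℤ[x,w]/⟨x^{ℓ+1}, w(w+ρ^k x^k)⟩`, `deg x = 2`, `deg w = 2k`. -/
noncomputable def sphereBundleIdeal (ℓ k : ℕ) (ρ : ℤ) : Ideal (MvPolynomial (Fin 2) ℤ) :=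
  Ideal.span {X 0 ^ (ℓ + 1), X 1 * (X 1 + C (ρ ^ k) * X 0 ^ k)}

namespace MvPolynomial

variable {R : Type*} [CommRing R] (k : ℕ) (a : R)

noncomputable def shear : MvPolynomial (Fin 2) R ≃ₐ[R] MvPolynomial (Fin 2) R :=
  AlgEquiv.ofAlgHom (aeval ![X 0, C a * X 0 ^ k + X 1]) (aeval ![X 0, C (-a) * X 0 ^ k + X 1])
    (by ext i; fin_cases i <;> simp) (by ext i; fin_cases i <;> simp)

@[simp] lemma shear_C (r : R) : shear k a (C r) = C r := (shear k a).commutes r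

@[simp] lemma shear_X_zero : shear k a (X 0) = X 0 := by simp [shear]

@[simp] lemma shear_X_one : shear k a (X 1) = C a * X 0 ^ k + X 1 := by simp [shear]

lemma shear_neg_leftInverse : Function.LeftInverse (shear k (-a)) (shear k a) := by
  have h : (shear k (-a) : MvPolynomial (Fin 2) R →ₐ[R] _).comp (shear k a).toAlgHom =
      AlgHom.id R _ := by
    ext i; fin_cases i <;> simp
  exact AlgHom.congr_fun h

end MvPolynomial

section sphereBundleIdeal

variable {ℓ k : ℕ} {ρ : ℤ}

lemma X_zero_pow_mem_sphereBundleIdeal : X 0 ^ (ℓ + 1) ∈ sphereBundleIdeal ℓ k ρ :=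
  Ideal.subset_span (Set.mem_insert _ _)

lemma X_one_mul_mem_sphereBundleIdeal :
    X 1 * (X 1 + C (ρ ^ k) * X 0 ^ k) ∈ sphereBundleIdeal ℓ k ρ :=
  Ideal.subset_span (Set.mem_insert_of_mem _ rfl)

lemma X_zero_pow_two_mul_mem_sphereBundleIdeal (h2k : ℓ + 1 ≤ 2 * k) :
    X 0 ^ (2 * k) ∈ sphereBundleIdeal ℓ k ρ := by
  rw [← Nat.add_sub_cancel' h2k, pow_add]
  exact Ideal.mul_mem_right _ _ X_zero_pow_mem_sphereBundleIdeal

end sphereBundleIdeal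

lemma map_shear_sphereBundleIdeal_le {ℓ k : ℕ} (h2k : ℓ + 1 ≤ 2 * k) {ρ₁ ρ₂ a : ℤ}
    (ha : 2 * a = ρ₂ ^ k - ρ₁ ^ k) :
    (sphereBundleIdeal ℓ k ρ₁).map (shear k a) ≤ sphereBundleIdeal ℓ k ρ₂ := by
  rw [sphereBundleIdeal, Ideal.map_span, Ideal.span_le, Set.image_pair, Set.pair_subset_iff]
  refine ⟨by simpa using X_zero_pow_mem_sphereBundleIdeal, ?_⟩
  have key : shear k a (X 1 * (X 1 + C (ρ₁ ^ k) * X 0 ^ k)) =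
      X 1 * (X 1 + C (ρ₂ ^ k) * X 0 ^ k) + C (a * (a + ρ₁ ^ k)) * X 0 ^ (2 * k) := by
    rw [show ρ₂ ^ k = 2 * a + ρ₁ ^ k by linarith]
    simp only [map_mul, map_add, shear_C, shear_X_zero, shear_X_one, map_pow, map_ofNat]
    ring
  rw [SetLike.mem_coe, key]
  exact Ideal.add_mem _ X_one_mul_mem_sphereBundleIdeal
    (Ideal.mul_mem_left _ _ (X_zero_pow_two_mul_mem_sphereBundleIdeal h2k))

lemma map_shear_sphereBundleIdeal {ℓ k : ℕ} (h2k : ℓ + 1 ≤ 2 * k) {ρ₁ ρ₂ a : ℤ}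
    (ha : 2 * a = ρ₂ ^ k - ρ₁ ^ k) :
    (sphereBundleIdeal ℓ k ρ₁).map (shear k a) = sphereBundleIdeal ℓ k ρ₂ := by
  refine le_antisymm (map_shear_sphereBundleIdeal_le h2k ha) ?_
  calc sphereBundleIdeal ℓ k ρ₂
      = ((sphereBundleIdeal ℓ k ρ₂).comap (shear k a)).map (shear k a) :=
        (Ideal.map_comap_eq_self_of_equiv _ _).symm
    _ ≤ ((sphereBundleIdeal ℓ k ρ₂).map (shear k (-a))).map (shear k a) :=
        Ideal.map_mono (Ideal.comap_le_map_of_inverse _ _ _ (shear_neg_leftInverse k a))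
    _ ≤ (sphereBundleIdeal ℓ k ρ₁).map (shear k a) :=
        Ideal.map_mono (map_shear_sphereBundleIdeal_le h2k (by linarith))

theorem stmt14_general (ℓ k : ℕ) (h2k : ℓ + 1 ≤ 2 * k)
    (ρ₁ ρ₂ : ℤ) (hodd₁ : Odd ρ₁) (hodd₂ : Odd ρ₂) :
    (2 : ℤ) ∣ ρ₂ ^ k - ρ₁ ^ k ∧
      ∀ a : ℤ, 2 * a = ρ₂ ^ k - ρ₁ ^ k →
        ∃ φ : (MvPolynomial (Fin 2) ℤ ⧸ sphereBundleIdeal ℓ k ρ₁) ≃+*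
            (MvPolynomial (Fin 2) ℤ ⧸ sphereBundleIdeal ℓ k ρ₂),
          φ (Ideal.Quotient.mk _ (X 0)) = Ideal.Quotient.mk _ (X 0) ∧
            φ (Ideal.Quotient.mk _ (X 1)) =
              Ideal.Quotient.mk _ (C a * X 0 ^ k + X 1) := by
  refine ⟨(hodd₂.pow.sub_odd hodd₁.pow).two_dvd, fun a ha => ?_⟩
  exact ⟨Ideal.quotientEquiv _ _ (shear k a).toRingEquiv (map_shear_sphereBundleIdeal h2k ha).symm,
    congrArg (Ideal.Quotient.mk _) (shear_X_zero k a),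
    congrArg (Ideal.Quotient.mk _) (shear_X_one k a)⟩

theorem stmt14 (ℓ k : ℕ) (hℓ : 4 ≤ ℓ) (hk : 1 ≤ k) (h2k : ℓ + 1 ≤ 2 * k)
    (ρ₁ ρ₂ : ℤ) (hρ₁ : ρ₁ ≠ 0) (hρ₂ : ρ₂ ≠ 0) (hodd₁ : Odd ρ₁) (hodd₂ : Odd ρ₂) :
    (2 : ℤ) ∣ ρ₂ ^ k - ρ₁ ^ k ∧
      ∀ a : ℤ, 2 * a = ρ₂ ^ k - ρ₁ ^ k →
        ∃ φ : (MvPolynomial (Fin 2) ℤ ⧸ sphereBundleIdeal ℓ k ρ₁) ≃+*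
            (MvPolynomial (Fin 2) ℤ ⧸ sphereBundleIdeal ℓ k ρ₂),
          φ (Ideal.Quotient.mk _ (X 0)) = Ideal.Quotient.mk _ (X 0) ∧
            φ (Ideal.Quotient.mk _ (X 1)) =
              Ideal.Quotient.mk _ (C a * X 0 ^ k + X 1) :=
  stmt14_general ℓ k h2k ρ₁ ρ₂ hodd₁ hodd₂
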